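/- arXiv:math/0510679 — 2 statements merged into one kernel-verified Lean document; each statement's English description precedes it below -/
import Mathlib

section
/- Fix nonzero integers a and b such that not both |a| = 1 and |b| = 1. Let v1=(-1,b,0), v2=(0,-1,0), v3=(1,-1,0), v4=(-1,0,-1), v5=(0,0,-1), v6=(0,1,0), v7=(0,0,1), v8=(1,0,a) in ℝ³. Every point of ℝ³ lies in at least one of the 12 cones ⟨v1,v2,v4⟩, ⟨v2,v3,v4⟩, ⟨v3,v4,v5⟩, ⟨v4,v5,v6⟩, ⟨v1,v4,v6⟩, ⟨v1,v6,v7⟩, ⟨v1,v2,v7⟩, ⟨v2,v3,v7⟩, ⟨v3,v5,v8⟩, ⟨v5,v6,v8⟩, ⟨v3,v7,v8⟩, ⟨v6,v7,v8⟩. -/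
def cone3 (u v w : Fin 3 → ℝ) : Set (Fin 3 → ℝ) :=
  {x | ∃ α β γ : ℝ, 0 ≤ α ∧ 0 ≤ β ∧ 0 ≤ γ ∧ x = α • u + β • v + γ • w}

/-! Each cone is simplicial, so membership of `x = (p, q, r)` amounts to nonnegativity of
its coordinates in the basis of generators, which are explicit linear forms in `p, q, r`
(e.g. `x = (-p) v₁ + (q + b p) v₆ + r v₇`). Cutting `ℝ³` by the signs of a few of these forms
(`p`, `r - p`, `p + q`, …) gives regions each covered by one cone or by two cones sharing a
facet, and these regions exhaust `ℝ³`. -/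

theorem mem_cone3_of_coords {u₀ u₁ u₂ v₀ v₁ v₂ w₀ w₁ w₂ α β γ : ℝ} {x : Fin 3 → ℝ}
    (hα : 0 ≤ α) (hβ : 0 ≤ β) (hγ : 0 ≤ γ)
    (h₀ : x 0 = α * u₀ + β * v₀ + γ * w₀) (h₁ : x 1 = α * u₁ + β * v₁ + γ * w₁)
    (h₂ : x 2 = α * u₂ + β * v₂ + γ * w₂) :
    x ∈ cone3 ![u₀, u₁, u₂] ![v₀, v₁, v₂] ![w₀, w₁, w₂] :=
  ⟨α, β, γ, hα, hβ, hγ, funext fun i => by fin_cases i <;> simpa⟩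

section Regions

variable {x : Fin 3 → ℝ}

theorem mem_cone3_of_fst_nonpos_of_thd_nonneg (b : ℝ) (hp : x 0 ≤ 0) (hr : 0 ≤ x 2) :
    x ∈ cone3 ![-1, b, 0] ![0, 1, 0] ![0, 0, 1] ∨
      x ∈ cone3 ![-1, b, 0] ![0, -1, 0] ![0, 0, 1] := by
  rcases le_total 0 (x 1 + b * x 0) with hq | hq
  · exact .inl (mem_cone3_of_coords (α := -x 0) (by linarith) hq hr
      (by ring) (by ring) (by ring))
  · exact .inr (mem_cone3_of_coords (α := -x 0) (β := -(x 1 + b * x 0)) (by linarith)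
      (by linarith) hr (by ring) (by ring) (by ring))

theorem mem_cone3_of_fst_le_thd_of_thd_nonpos (b : ℝ) (hpr : x 0 ≤ x 2) (hr : x 2 ≤ 0) :
    x ∈ cone3 ![-1, b, 0] ![0, -1, 0] ![-1, 0, -1] ∨
      x ∈ cone3 ![-1, b, 0] ![-1, 0, -1] ![0, 1, 0] := by
  rcases le_total (x 1) (b * (x 2 - x 0)) with hq | hq
  · exact .inl (mem_cone3_of_coords (α := x 2 - x 0) (β := b * (x 2 - x 0) - x 1)
      (γ := -x 2) (by linarith) (by linarith) (by linarith)
      (by ring) (by ring) (by ring))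
  · exact .inr (mem_cone3_of_coords (α := x 2 - x 0) (β := -x 2)
      (γ := x 1 - b * (x 2 - x 0)) (by linarith) (by linarith) (by linarith)
      (by ring) (by ring) (by ring))

theorem mem_cone3_of_fst_nonneg_of_snd_nonneg (a : ℝ) (hp : 0 ≤ x 0) (hq : 0 ≤ x 1) :
    x ∈ cone3 ![0, 0, -1] ![0, 1, 0] ![1, 0, a] ∨
      x ∈ cone3 ![0, 1, 0] ![0, 0, 1] ![1, 0, a] := by
  rcases le_total (x 2) (a * x 0) with hr | hr
  · exact .inl (mem_cone3_of_coords (α := a * x 0 - x 2) (by linarith) hq hp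
      (by ring) (by ring) (by ring))
  · exact .inr (mem_cone3_of_coords (β := x 2 - a * x 0) hq (by linarith) hp
      (by ring) (by ring) (by ring))

theorem mem_cone3_of_snd_nonpos_of_fst_add_snd_nonneg (a : ℝ) (hq : x 1 ≤ 0)
    (hpq : 0 ≤ x 0 + x 1) :
    x ∈ cone3 ![1, -1, 0] ![0, 0, -1] ![1, 0, a] ∨
      x ∈ cone3 ![1, -1, 0] ![0, 0, 1] ![1, 0, a] := by
  rcases le_total (x 2) (a * (x 0 + x 1)) with hr | hr
  · exact .inl (mem_cone3_of_coords (α := -x 1) (β := a * (x 0 + x 1) - x 2) (by linarith)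
      (by linarith) hpq (by ring) (by ring) (by ring))
  · exact .inr (mem_cone3_of_coords (α := -x 1) (β := x 2 - a * (x 0 + x 1)) (by linarith)
      (by linarith) hpq (by ring) (by ring) (by ring))

theorem mem_cone3_of_thd_le_fst_of_fst_add_snd_nonpos (hr : x 2 ≤ 0) (hrp : x 2 ≤ x 0)
    (hq : x 1 ≤ 0) (hpq : x 0 + x 1 ≤ 0) :
    x ∈ cone3 ![0, -1, 0] ![1, -1, 0] ![-1, 0, -1] ∨
      x ∈ cone3 ![1, -1, 0] ![-1, 0, -1] ![0, 0, -1] := by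
  rcases le_total (x 0 + x 1) (x 2) with hpqr | hpqr
  · exact .inl (mem_cone3_of_coords (α := x 2 - x 0 - x 1) (β := x 0 - x 2) (γ := -x 2)
      (by linarith) (by linarith) (by linarith)
      (by ring) (by ring) (by ring))
  · exact .inr (mem_cone3_of_coords (α := -x 1) (β := -x 0 - x 1) (γ := x 0 + x 1 - x 2)
      (by linarith) (by linarith) (by linarith)
      (by ring) (by ring) (by ring))

theorem mem_cone3_of_thd_le_fst_of_fst_nonpos_of_snd_nonneg (hrp : x 2 ≤ x 0)
    (hp : x 0 ≤ 0) (hq : 0 ≤ x 1) : x ∈ cone3 ![-1, 0, -1] ![0, 0, -1] ![0, 1, 0] :=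
  mem_cone3_of_coords (α := -x 0) (β := x 0 - x 2) (by linarith) (by linarith) hq
    (by ring) (by ring) (by ring)

theorem mem_cone3_of_fst_add_snd_nonpos_of_fst_nonneg_of_thd_nonneg (hpq : x 0 + x 1 ≤ 0)
    (hp : 0 ≤ x 0) (hr : 0 ≤ x 2) : x ∈ cone3 ![0, -1, 0] ![1, -1, 0] ![0, 0, 1] :=
  mem_cone3_of_coords (α := -x 0 - x 1) (by linarith) hp hr (by ring) (by ring) (by ring)

end Regions

theorem stmt15_general (a b : ℤ) : ∀ x : Fin 3 → ℝ,
      x ∈ cone3 ![-1,(b:ℝ),0] ![0,-1,0] ![-1,0,-1] ∨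
      x ∈ cone3 ![0,-1,0] ![1,-1,0] ![-1,0,-1] ∨
      x ∈ cone3 ![1,-1,0] ![-1,0,-1] ![0,0,-1] ∨
      x ∈ cone3 ![-1,0,-1] ![0,0,-1] ![0,1,0] ∨
      x ∈ cone3 ![-1,(b:ℝ),0] ![-1,0,-1] ![0,1,0] ∨
      x ∈ cone3 ![-1,(b:ℝ),0] ![0,1,0] ![0,0,1] ∨
      x ∈ cone3 ![-1,(b:ℝ),0] ![0,-1,0] ![0,0,1] ∨
      x ∈ cone3 ![0,-1,0] ![1,-1,0] ![0,0,1] ∨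
      x ∈ cone3 ![1,-1,0] ![0,0,-1] ![1,0,(a:ℝ)] ∨
      x ∈ cone3 ![0,0,-1] ![0,1,0] ![1,0,(a:ℝ)] ∨
      x ∈ cone3 ![1,-1,0] ![0,0,1] ![1,0,(a:ℝ)] ∨
      x ∈ cone3 ![0,1,0] ![0,0,1] ![1,0,(a:ℝ)] := by
  intro x
  rcases le_total (x 0) 0 with hp | hp
  · rcases le_total 0 (x 2) with hr | hr
    · have := mem_cone3_of_fst_nonpos_of_thd_nonneg (b : ℝ) hp hr; tauto
    rcases le_total (x 0) (x 2) with hpr | hrp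
    · have := mem_cone3_of_fst_le_thd_of_thd_nonpos (b : ℝ) hpr hr; tauto
    rcases le_total 0 (x 1) with hq | hq
    · have := mem_cone3_of_thd_le_fst_of_fst_nonpos_of_snd_nonneg hrp hp hq; tauto
    · have := mem_cone3_of_thd_le_fst_of_fst_add_snd_nonpos hr hrp hq (by linarith); tauto
  rcases le_total 0 (x 1) with hq | hq
  · have := mem_cone3_of_fst_nonneg_of_snd_nonneg (a : ℝ) hp hq; tauto
  rcases le_total 0 (x 0 + x 1) with hpq | hpq
  · have := mem_cone3_of_snd_nonpos_of_fst_add_snd_nonneg (a : ℝ) hq hpq; tauto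
  rcases le_total 0 (x 2) with hr | hr
  · have := mem_cone3_of_fst_add_snd_nonpos_of_fst_nonneg_of_thd_nonneg hpq hp hr; tauto
  · have := mem_cone3_of_thd_le_fst_of_fst_add_snd_nonpos hr (by linarith) hq hpq; tauto

theorem stmt15 (a b : ℤ) (ha : a ≠ 0) (hb : b ≠ 0) (hab : ¬(|a| = 1 ∧ |b| = 1)) : ∀ x : Fin 3 → ℝ,
      x ∈ cone3 ![-1,(b:ℝ),0] ![0,-1,0] ![-1,0,-1] ∨
      x ∈ cone3 ![0,-1,0] ![1,-1,0] ![-1,0,-1] ∨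
      x ∈ cone3 ![1,-1,0] ![-1,0,-1] ![0,0,-1] ∨
      x ∈ cone3 ![-1,0,-1] ![0,0,-1] ![0,1,0] ∨
      x ∈ cone3 ![-1,(b:ℝ),0] ![-1,0,-1] ![0,1,0] ∨
      x ∈ cone3 ![-1,(b:ℝ),0] ![0,1,0] ![0,0,1] ∨
      x ∈ cone3 ![-1,(b:ℝ),0] ![0,-1,0] ![0,0,1] ∨
      x ∈ cone3 ![0,-1,0] ![1,-1,0] ![0,0,1] ∨
      x ∈ cone3 ![1,-1,0] ![0,0,-1] ![1,0,(a:ℝ)] ∨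
      x ∈ cone3 ![0,0,-1] ![0,1,0] ![1,0,(a:ℝ)] ∨
      x ∈ cone3 ![1,-1,0] ![0,0,1] ![1,0,(a:ℝ)] ∨
      x ∈ cone3 ![0,1,0] ![0,0,1] ![1,0,(a:ℝ)] :=
  stmt15_general a b
end

section
/- Let v1=(0,0,1), v2=(1,0,0), v3=(0,-1,-1), v4=(-1,-2,-1), v5=(0,1,0), v6=(0,0,-1), v7=(-1,-2,-2), v8=(-1,-1,-2) in ℝ³. For each of the 12 cones ⟨v1,v2,v3⟩, ⟨v1,v3,v4⟩, ⟨v1,v4,v5⟩, ⟨v1,v2,v5⟩, ⟨v2,v5,v6⟩, ⟨v3,v4,v7⟩, ⟨v2,v3,v8⟩, ⟨v3,v7,v8⟩, ⟨v4,v7,v8⟩, ⟨v4,v5,v8⟩, ⟨v5,v6,v8⟩, ⟨v2,v6,v8⟩, there exist three vectors among {v1, v2, v5, v7} whose cone contains that cone. -/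
lemma mem_cone3 {u v w x : Fin 3 → ℝ} (a b c : ℝ) (ha : 0 ≤ a) (hb : 0 ≤ b)
    (hc : 0 ≤ c) (h : x = a • u + b • v + c • w) : x ∈ cone3 u v w :=
  ⟨a, b, c, ha, hb, hc, h⟩

lemma cone3_subset {u v w a b c : Fin 3 → ℝ} (h1 : a ∈ cone3 u v w)
    (h2 : b ∈ cone3 u v w) (h3 : c ∈ cone3 u v w) : cone3 a b c ⊆ cone3 u v w := by
  rintro x ⟨α, β, γ, hα, hβ, hγ, rfl⟩
  obtain ⟨a1, a2, a3, ha1, ha2, ha3, rfl⟩ := h1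
  obtain ⟨b1, b2, b3, hb1, hb2, hb3, rfl⟩ := h2
  obtain ⟨c1, c2, c3, hc1, hc2, hc3, rfl⟩ := h3
  exact ⟨α * a1 + β * b1 + γ * c1, α * a2 + β * b2 + γ * c2, α * a3 + β * b3 + γ * c3,
    by positivity, by positivity, by positivity, by module⟩

lemma mem_left (u v w : Fin 3 → ℝ) : u ∈ cone3 u v w :=
  mem_cone3 1 0 0 zero_le_one le_rfl le_rfl (by module)

lemma mem_mid (u v w : Fin 3 → ℝ) : v ∈ cone3 u v w :=
  mem_cone3 0 1 0 le_rfl zero_le_one le_rfl (by module)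

lemma mem_right (u v w : Fin 3 → ℝ) : w ∈ cone3 u v w :=
  mem_cone3 0 0 1 le_rfl le_rfl zero_le_one (by module)

lemma hv3 : ![0,-1,-1] ∈ cone3 ![0,0,1] ![1,0,0] ![-1,-2,-2] := by
  refine mem_cone3 0 (1/2) (1/2) le_rfl (by norm_num) (by norm_num) ?_
  funext i; fin_cases i <;> norm_num

lemma hv3' : ![0,-1,-1] ∈ cone3 ![1,0,0] ![0,1,0] ![-1,-2,-2] := by
  refine mem_cone3 (1/2) 0 (1/2) (by norm_num) le_rfl (by norm_num) ?_
  funext i; fin_cases i <;> norm_num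

lemma hv4 : ![-1,-2,-1] ∈ cone3 ![0,0,1] ![1,0,0] ![-1,-2,-2] := by
  refine mem_cone3 1 0 1 zero_le_one le_rfl zero_le_one ?_
  funext i; fin_cases i <;> norm_num

lemma hv4' : ![-1,-2,-1] ∈ cone3 ![0,0,1] ![0,1,0] ![-1,-2,-2] := by
  refine mem_cone3 1 0 1 zero_le_one le_rfl zero_le_one ?_
  funext i; fin_cases i <;> norm_num

lemma hv6 : ![0,0,-1] ∈ cone3 ![1,0,0] ![0,1,0] ![-1,-2,-2] := by
  refine mem_cone3 (1/2) 1 (1/2) (by norm_num) zero_le_one (by norm_num) ?_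
  funext i; fin_cases i <;> norm_num

lemma hv8 : ![-1,-1,-2] ∈ cone3 ![1,0,0] ![0,1,0] ![-1,-2,-2] := by
  refine mem_cone3 0 1 1 le_rfl zero_le_one zero_le_one ?_
  funext i; fin_cases i <;> norm_num

lemma hv8' : ![-1,-1,-2] ∈ cone3 ![0,0,1] ![0,1,0] ![-1,-2,-2] := by
  refine mem_cone3 0 1 1 le_rfl zero_le_one zero_le_one ?_
  funext i; fin_cases i <;> norm_num

theorem stmt18 :
    (∃ u v w : Fin 3 → ℝ, u ∈ ({![0,0,1], ![1,0,0], ![0,1,0], ![-1,-2,-2]} : Set (Fin 3 → ℝ)) ∧ v ∈ ({![0,0,1], ![1,0,0], ![0,1,0], ![-1,-2,-2]} : Set (Fin 3 → ℝ)) ∧ w ∈ ({![0,0,1], ![1,0,0], ![0,1,0], ![-1,-2,-2]} : Set (Fin 3 → ℝ)) ∧ cone3 ![0,0,1] ![1,0,0] ![0,-1,-1] ⊆ cone3 u v w) ∧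
    (∃ u v w : Fin 3 → ℝ, u ∈ ({![0,0,1], ![1,0,0], ![0,1,0], ![-1,-2,-2]} : Set (Fin 3 → ℝ)) ∧ v ∈ ({![0,0,1], ![1,0,0], ![0,1,0], ![-1,-2,-2]} : Set (Fin 3 → ℝ)) ∧ w ∈ ({![0,0,1], ![1,0,0], ![0,1,0], ![-1,-2,-2]} : Set (Fin 3 → ℝ)) ∧ cone3 ![0,0,1] ![0,-1,-1] ![-1,-2,-1] ⊆ cone3 u v w) ∧
    (∃ u v w : Fin 3 → ℝ, u ∈ ({![0,0,1], ![1,0,0], ![0,1,0], ![-1,-2,-2]} : Set (Fin 3 → ℝ)) ∧ v ∈ ({![0,0,1], ![1,0,0], ![0,1,0], ![-1,-2,-2]} : Set (Fin 3 → ℝ)) ∧ w ∈ ({![0,0,1], ![1,0,0], ![0,1,0], ![-1,-2,-2]} : Set (Fin 3 → ℝ)) ∧ cone3 ![0,0,1] ![-1,-2,-1] ![0,1,0] ⊆ cone3 u v w) ∧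
    (∃ u v w : Fin 3 → ℝ, u ∈ ({![0,0,1], ![1,0,0], ![0,1,0], ![-1,-2,-2]} : Set (Fin 3 → ℝ)) ∧ v ∈ ({![0,0,1], ![1,0,0], ![0,1,0], ![-1,-2,-2]} : Set (Fin 3 → ℝ)) ∧ w ∈ ({![0,0,1], ![1,0,0], ![0,1,0], ![-1,-2,-2]} : Set (Fin 3 → ℝ)) ∧ cone3 ![0,0,1] ![1,0,0] ![0,1,0] ⊆ cone3 u v w) ∧
    (∃ u v w : Fin 3 → ℝ, u ∈ ({![0,0,1], ![1,0,0], ![0,1,0], ![-1,-2,-2]} : Set (Fin 3 → ℝ)) ∧ v ∈ ({![0,0,1], ![1,0,0], ![0,1,0], ![-1,-2,-2]} : Set (Fin 3 → ℝ)) ∧ w ∈ ({![0,0,1], ![1,0,0], ![0,1,0], ![-1,-2,-2]} : Set (Fin 3 → ℝ)) ∧ cone3 ![1,0,0] ![0,1,0] ![0,0,-1] ⊆ cone3 u v w) ∧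
    (∃ u v w : Fin 3 → ℝ, u ∈ ({![0,0,1], ![1,0,0], ![0,1,0], ![-1,-2,-2]} : Set (Fin 3 → ℝ)) ∧ v ∈ ({![0,0,1], ![1,0,0], ![0,1,0], ![-1,-2,-2]} : Set (Fin 3 → ℝ)) ∧ w ∈ ({![0,0,1], ![1,0,0], ![0,1,0], ![-1,-2,-2]} : Set (Fin 3 → ℝ)) ∧ cone3 ![0,-1,-1] ![-1,-2,-1] ![-1,-2,-2] ⊆ cone3 u v w) ∧
    (∃ u v w : Fin 3 → ℝ, u ∈ ({![0,0,1], ![1,0,0], ![0,1,0], ![-1,-2,-2]} : Set (Fin 3 → ℝ)) ∧ v ∈ ({![0,0,1], ![1,0,0], ![0,1,0], ![-1,-2,-2]} : Set (Fin 3 → ℝ)) ∧ w ∈ ({![0,0,1], ![1,0,0], ![0,1,0], ![-1,-2,-2]} : Set (Fin 3 → ℝ)) ∧ cone3 ![1,0,0] ![0,-1,-1] ![-1,-1,-2] ⊆ cone3 u v w) ∧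
    (∃ u v w : Fin 3 → ℝ, u ∈ ({![0,0,1], ![1,0,0], ![0,1,0], ![-1,-2,-2]} : Set (Fin 3 → ℝ)) ∧ v ∈ ({![0,0,1], ![1,0,0], ![0,1,0], ![-1,-2,-2]} : Set (Fin 3 → ℝ)) ∧ w ∈ ({![0,0,1], ![1,0,0], ![0,1,0], ![-1,-2,-2]} : Set (Fin 3 → ℝ)) ∧ cone3 ![0,-1,-1] ![-1,-2,-2] ![-1,-1,-2] ⊆ cone3 u v w) ∧
    (∃ u v w : Fin 3 → ℝ, u ∈ ({![0,0,1], ![1,0,0], ![0,1,0], ![-1,-2,-2]} : Set (Fin 3 → ℝ)) ∧ v ∈ ({![0,0,1], ![1,0,0], ![0,1,0], ![-1,-2,-2]} : Set (Fin 3 → ℝ)) ∧ w ∈ ({![0,0,1], ![1,0,0], ![0,1,0], ![-1,-2,-2]} : Set (Fin 3 → ℝ)) ∧ cone3 ![-1,-2,-1] ![-1,-2,-2] ![-1,-1,-2] ⊆ cone3 u v w) ∧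
    (∃ u v w : Fin 3 → ℝ, u ∈ ({![0,0,1], ![1,0,0], ![0,1,0], ![-1,-2,-2]} : Set (Fin 3 → ℝ)) ∧ v ∈ ({![0,0,1], ![1,0,0], ![0,1,0], ![-1,-2,-2]} : Set (Fin 3 → ℝ)) ∧ w ∈ ({![0,0,1], ![1,0,0], ![0,1,0], ![-1,-2,-2]} : Set (Fin 3 → ℝ)) ∧ cone3 ![-1,-2,-1] ![0,1,0] ![-1,-1,-2] ⊆ cone3 u v w) ∧
    (∃ u v w : Fin 3 → ℝ, u ∈ ({![0,0,1], ![1,0,0], ![0,1,0], ![-1,-2,-2]} : Set (Fin 3 → ℝ)) ∧ v ∈ ({![0,0,1], ![1,0,0], ![0,1,0], ![-1,-2,-2]} : Set (Fin 3 → ℝ)) ∧ w ∈ ({![0,0,1], ![1,0,0], ![0,1,0], ![-1,-2,-2]} : Set (Fin 3 → ℝ)) ∧ cone3 ![0,1,0] ![0,0,-1] ![-1,-1,-2] ⊆ cone3 u v w) ∧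
    (∃ u v w : Fin 3 → ℝ, u ∈ ({![0,0,1], ![1,0,0], ![0,1,0], ![-1,-2,-2]} : Set (Fin 3 → ℝ)) ∧ v ∈ ({![0,0,1], ![1,0,0], ![0,1,0], ![-1,-2,-2]} : Set (Fin 3 → ℝ)) ∧ w ∈ ({![0,0,1], ![1,0,0], ![0,1,0], ![-1,-2,-2]} : Set (Fin 3 → ℝ)) ∧ cone3 ![1,0,0] ![0,0,-1] ![-1,-1,-2] ⊆ cone3 u v w) := by
  refine ⟨⟨![0,0,1], ![1,0,0], ![-1,-2,-2], by simp, by simp, by simp,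
      cone3_subset (mem_left _ _ _) (mem_mid _ _ _) hv3⟩,
    ⟨![0,0,1], ![1,0,0], ![-1,-2,-2], by simp, by simp, by simp,
      cone3_subset (mem_left _ _ _) hv3 hv4⟩,
    ⟨![0,0,1], ![0,1,0], ![-1,-2,-2], by simp, by simp, by simp,
      cone3_subset (mem_left _ _ _) hv4' (mem_mid _ _ _)⟩,
    ⟨![0,0,1], ![1,0,0], ![0,1,0], by simp, by simp, by simp,
      cone3_subset (mem_left _ _ _) (mem_mid _ _ _) (mem_right _ _ _)⟩,
    ⟨![1,0,0], ![0,1,0], ![-1,-2,-2], by simp, by simp, by simp,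
      cone3_subset (mem_left _ _ _) (mem_mid _ _ _) hv6⟩,
    ⟨![0,0,1], ![1,0,0], ![-1,-2,-2], by simp, by simp, by simp,
      cone3_subset hv3 hv4 (mem_right _ _ _)⟩,
    ⟨![1,0,0], ![0,1,0], ![-1,-2,-2], by simp, by simp, by simp,
      cone3_subset (mem_left _ _ _) hv3' hv8⟩,
    ⟨![1,0,0], ![0,1,0], ![-1,-2,-2], by simp, by simp, by simp,
      cone3_subset hv3' (mem_right _ _ _) hv8⟩,
    ⟨![0,0,1], ![0,1,0], ![-1,-2,-2], by simp, by simp, by simp,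
      cone3_subset hv4' (mem_right _ _ _) hv8'⟩,
    ⟨![0,0,1], ![0,1,0], ![-1,-2,-2], by simp, by simp, by simp,
      cone3_subset hv4' (mem_mid _ _ _) hv8'⟩,
    ⟨![1,0,0], ![0,1,0], ![-1,-2,-2], by simp, by simp, by simp,
      cone3_subset (mem_mid _ _ _) hv6 hv8⟩,
    ⟨![1,0,0], ![0,1,0], ![-1,-2,-2], by simp, by simp, by simp,
      cone3_subset (mem_left _ _ _) hv6 hv8⟩⟩
end
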